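/- arXiv:2503.10243 — 2 statements merged into one kernel-verified Lean document; each statement's English description precedes it below -/
import Mathlib

section
/- For fixed u, v, w with w > 0, the kernel Φ(x,u,v,w) admits the representation Φ(x,u,v,w) = (8/π) ∫₀^∞ sin(yu)·cos(yv)·sin(xy)·K_{iy}(w) dy, where K_{iy}(w) = ∫₀^∞ e^{-w·cosh t}·cos(yt) dt. -/
open MeasureTheory Set Filter

noncomputable def K0 (w : ℝ) : ℝ := ∫ t in Ioi (0:ℝ), Real.exp (-w * Real.cosh t)

noncomputable def Phi (x u v w : ℝ) : ℝ :=
  Real.exp (-w * Real.cosh (x - u + v)) + Real.exp (-w * Real.cosh (x - u - v))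
    - Real.exp (-w * Real.cosh (x + u + v)) - Real.exp (-w * Real.cosh (x + u - v))

noncomputable def Kiy (y w : ℝ) : ℝ :=
  ∫ t in Ioi (0:ℝ), Real.exp (-w * Real.cosh t) * Real.cos (y * t)

noncomputable def polyconv (f g h : ℝ → ℝ) (x : ℝ) : ℝ :=
  (1 / (2 * Real.sqrt (2 * Real.pi))) *
    ∫ u in Ioi (0:ℝ), ∫ v in Ioi (0:ℝ), ∫ w in Ioi (0:ℝ),
      Phi x u v w * f u * g v * h w

noncomputable def Fs (f : ℝ → ℝ) (y : ℝ) : ℝ :=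
  Real.sqrt (2 / Real.pi) * ∫ x in Ioi (0:ℝ), Real.sin (x * y) * f x

noncomputable def Fc (f : ℝ → ℝ) (y : ℝ) : ℝ :=
  Real.sqrt (2 / Real.pi) * ∫ x in Ioi (0:ℝ), Real.cos (x * y) * f x

noncomputable def KLtr (h : ℝ → ℝ) (y : ℝ) : ℝ := ∫ w in Ioi (0:ℝ), Kiy y w * h w

noncomputable def watson (g0 h0 f : ℝ → ℝ) (x : ℝ) : ℝ :=
  polyconv f g0 h0 x - deriv (deriv (polyconv f g0 h0)) x

noncomputable def sconv (f φ : ℝ → ℝ) (x : ℝ) : ℝ :=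
  (1 / Real.sqrt (2 * Real.pi)) * ∫ u in Ioi (0:ℝ), f u * (φ |x - u| - φ (x + u))

noncomputable def coshMin (x u v : ℝ) : ℝ :=
  min (min (Real.cosh (x - u + v)) (Real.cosh (x - u - v)))
      (min (Real.cosh (x + u + v)) (Real.cosh (x + u - v)))

/-!
For an even integrable `f`, the Fourier transform of `f` is `ξ ↦ 2 ∫₀^∞ f t cos (2πξt) dt`, again
a real even function. Fourier inversion, with this identity applied a second time, gives the
cosine inversion formula `∫₀^∞ (∫₀^∞ f t cos (yt) dt) cos (ys) dy = (π/2) f s`. For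
`f t = exp (-w cosh t)` the inner integral is `K_{iy}(w)`; inversion applies because `f`, `f'` and
`f''` are dominated by `cosh² t · exp (-w cosh t)`, so that `ξ² 𝓕 f ξ` is bounded. By the
product-to-sum formula, `4 sin (yu) cos (yv) sin (xy)` is the signed sum of the four cosines
`cos (y (x ∓ u ± v))` occurring in `Φ`, and the theorem follows term by term.
-/

open Real FourierTransform

theorem Function.Odd.integral_eq_zero {E : Type*} [NormedAddCommGroup E] [NormedSpace ℝ E]
    {f : ℝ → E} (hf : Function.Odd f) : ∫ x, f x = 0 := by
  have h := integral_neg_eq_self f volume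
  rw [integral_congr_ae (ae_of_all _ hf), integral_neg] at h
  have h2 : (2 : ℝ) • ∫ x, f x = 0 := by
    rw [two_smul]
    nth_rewrite 1 [← h]
    exact neg_add_cancel _
  exact (smul_eq_zero.mp h2).resolve_left two_ne_zero

theorem Function.Even.integral_eq_two_mul_integral_Ioi {f : ℝ → ℝ} (hf : Function.Even f) :
    ∫ x, f x = 2 * ∫ x in Ioi 0, f x := by
  rw [← integral_comp_abs]
  congr 1 with x
  rcases abs_choice x with h | h <;> rw [h]
  exact (hf x).symm

theorem integrable_mul_cos {f : ℝ → ℝ} (hf : Integrable f) (c : ℝ) :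
    Integrable fun t ↦ f t * cos (c * t) :=
  hf.mul_bdd (by fun_prop) (ae_of_all _ fun t ↦ by simpa using abs_cos_le_one (c * t))

theorem integrable_mul_sin {f : ℝ → ℝ} (hf : Integrable f) (c : ℝ) :
    Integrable fun t ↦ f t * sin (c * t) :=
  hf.mul_bdd (by fun_prop) (ae_of_all _ fun t ↦ by simpa using abs_sin_le_one (c * t))

/-- Unnormalized (unlike `Fc`), so that `Kiy y w` is by definition the cosine transform of
`fun t ↦ exp (-w * cosh t)` at `y`. -/
noncomputable def cosTransform (f : ℝ → ℝ) (y : ℝ) : ℝ :=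
  ∫ t in Ioi 0, f t * cos (y * t)

theorem cosTransform_neg (f : ℝ → ℝ) (y : ℝ) : cosTransform f (-y) = cosTransform f y := by
  simp only [cosTransform, neg_mul, cos_neg]

theorem fourier_ofReal_of_even {f : ℝ → ℝ} (hf : Integrable f) (heven : Function.Even f)
    (ξ : ℝ) : 𝓕 (fun t ↦ (f t : ℂ)) ξ = ((2 * cosTransform f (2 * π * ξ) : ℝ) : ℂ) := by
  have hpt : ∀ t : ℝ, Complex.exp (↑(-2 * π * t * ξ) * Complex.I) • (f t : ℂ)
      = ((f t * cos (2 * π * ξ * t) : ℝ) : ℂ)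
        - ((f t * sin (2 * π * ξ * t) : ℝ) : ℂ) * Complex.I := by
    intro t
    rw [Complex.exp_mul_I, ← Complex.ofReal_cos, ← Complex.ofReal_sin,
      show -2 * π * t * ξ = -(2 * π * ξ * t) by ring, cos_neg, sin_neg, smul_eq_mul]
    push_cast
    ring
  have hodd : ∫ t, f t * sin (2 * π * ξ * t) = 0 :=
    Function.Odd.integral_eq_zero fun t ↦ by simp only [heven t, mul_neg, sin_neg]
  have heven' : Function.Even fun t ↦ f t * cos (2 * π * ξ * t) := fun t ↦ by
    simp only [heven t, mul_neg, cos_neg]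
  simp only [Real.fourier_real_eq_integral_exp_smul, hpt]
  rw [integral_sub (integrable_mul_cos hf _).ofReal ((integrable_mul_sin hf _).ofReal.mul_const _),
    integral_mul_const, integral_complex_ofReal, integral_complex_ofReal, hodd,
    heven'.integral_eq_two_mul_integral_Ioi]
  simp [cosTransform]

theorem integrable_fourier_of_hasDerivAt_hasDerivAt {E : Type*} [NormedAddCommGroup E]
    [NormedSpace ℂ E]
    {f f' f'' : ℝ → E} (hf : ∀ t, HasDerivAt f (f' t) t) (hf' : ∀ t, HasDerivAt f' (f'' t) t)
    (hfi : Integrable f) (hf'i : Integrable f') (hf''i : Integrable f'') : Integrable (𝓕 f) := by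
  have hd : deriv f = f' := funext fun t ↦ (hf t).deriv
  have hd' : deriv f' = f'' := funext fun t ↦ (hf' t).deriv
  have h1 := Real.fourier_deriv hfi (fun t ↦ (hf t).differentiableAt) (hd ▸ hf'i)
  have h2 := Real.fourier_deriv hf'i (fun t ↦ (hf' t).differentiableAt) (hd' ▸ hf''i)
  rw [hd] at h1
  rw [hd'] at h2
  set A := ∫ t, ‖f t‖
  set B := ∫ t, ‖f'' t‖
  have hbound (ξ : ℝ) : ‖𝓕 f ξ‖ ≤ (A + B) * (1 + ξ ^ 2)⁻¹ := by
    have hA : ‖𝓕 f ξ‖ ≤ A := VectorFourier.norm_fourierIntegral_le_integral_norm _ _ _ _ _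
    have hB : ‖𝓕 f'' ξ‖ ≤ B := VectorFourier.norm_fourierIntegral_le_integral_norm _ _ _ _ _
    have h2ξ : ‖𝓕 f'' ξ‖ = (2 * π * ξ) ^ 2 * ‖𝓕 f ξ‖ := by
      rw [congrFun h2 ξ, congrFun h1 ξ, norm_smul, norm_smul, ← mul_assoc, ← sq]
      simp [Complex.norm_real, abs_of_pos pi_pos, mul_pow]
    have hπ : 1 ≤ (2 * π) ^ 2 := by nlinarith [pi_gt_three]
    rw [le_mul_inv_iff₀ (by positivity)]
    have := mul_le_mul_of_nonneg_left hπ (mul_nonneg (sq_nonneg ξ) (norm_nonneg (𝓕 f ξ)))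
    nlinarith
  refine (integrable_inv_one_add_sq.const_mul (A + B)).mono' ?_ (ae_of_all _ hbound)
  exact (VectorFourier.fourierIntegral_continuous continuous_fourierChar
    (innerSL ℝ).continuous₂ hfi).aestronglyMeasurable

theorem integrable_cosTransform {f : ℝ → ℝ} (hf : Integrable f) (heven : Function.Even f)
    (hF : Integrable (𝓕 fun t ↦ (f t : ℂ))) : Integrable (cosTransform f) := by
  have h : Integrable fun ξ ↦ 2 * cosTransform f (2 * π * ξ) :=
    hF.re.congr (ae_of_all _ fun ξ ↦ by simp [fourier_ofReal_of_even hf heven ξ])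
  refine ((h.comp_mul_left' (R := (2 * π)⁻¹) (by positivity)).div_const 2).congr
    (ae_of_all _ fun y ↦ ?_)
  simp only [← mul_assoc, mul_inv_cancel₀ (mul_pos two_pos pi_pos).ne', one_mul]
  ring

theorem cosTransform_cosTransform_eq {f : ℝ → ℝ} (hf : Integrable f) (heven : Function.Even f)
    (hF : Integrable (𝓕 fun t ↦ (f t : ℂ))) {s : ℝ} (hs : ContinuousAt f s) :
    cosTransform (cosTransform f) s = π / 2 * f s := by
  set h : ℝ → ℝ := fun ξ ↦ 2 * cosTransform f (2 * π * ξ)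
  have hFh : 𝓕 (fun t ↦ (f t : ℂ)) = fun ξ ↦ (h ξ : ℂ) :=
    funext (fourier_ofReal_of_even hf heven)
  have hh : Integrable h := by simpa [hFh] using hF.re
  have hh_even : Function.Even h := fun ξ ↦ by simp only [h, mul_neg, cosTransform_neg]
  have hinv := hf.ofReal.fourierInv_fourier_eq hF (Complex.continuous_ofReal.continuousAt.comp hs)
  rw [Real.fourierInv_eq_fourier_neg, hFh, fourier_ofReal_of_even hh hh_even,
    Complex.ofReal_inj] at hinv
  have hscale :
      cosTransform h (2 * π * -s) = (2 * π)⁻¹ * (2 * cosTransform (cosTransform f) s) := by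
    set G : ℝ → ℝ := fun y ↦ 2 * cosTransform f y * cos (s * y)
    have hG := integral_comp_mul_left_Ioi G 0 (mul_pos two_pos pi_pos)
    rw [mul_zero, smul_eq_mul] at hG
    calc ∫ t in Ioi 0, h t * cos (2 * π * -s * t) = ∫ t in Ioi 0, G (2 * π * t) := by
          congr 1 with t
          rw [show 2 * π * -s * t = -(s * (2 * π * t)) by ring, cos_neg]
      _ = (2 * π)⁻¹ * (2 * cosTransform (cosTransform f) s) := by
          rw [hG, cosTransform]
          simp only [G, mul_assoc, integral_const_mul]
  rw [← hinv, hscale]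
  field_simp

theorem one_add_sq_div_four_le_cosh (t : ℝ) : 1 + t ^ 2 / 4 ≤ cosh t := by
  have h1 := quadratic_le_exp_of_nonneg (abs_nonneg t)
  have h2 := add_one_le_exp (-|t|)
  rw [sq_abs] at h1
  rw [← cosh_abs, cosh_eq]
  linarith

theorem abs_sinh_le_cosh (t : ℝ) : |sinh t| ≤ cosh t := by
  rw [abs_sinh, ← cosh_abs]
  exact (sinh_lt_cosh _).le

theorem sq_mul_exp_neg_mul_le {a c : ℝ} (ha : 0 < a) (hc : 0 ≤ c) :
    c ^ 2 * exp (-a * c) ≤ 8 / a ^ 2 * exp (-(a / 2) * c) := by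
  have hquad := quadratic_le_exp_of_nonneg (by positivity : 0 ≤ a / 2 * c)
  have hsq : a ^ 2 * c ^ 2 ≤ 8 * exp (a / 2 * c) := by nlinarith
  have hsplit : exp (-a * c) = exp (-(a / 2) * c) * exp (-(a / 2) * c) := by
    rw [← exp_add]
    congr 1
    ring
  have hinv : exp (a / 2 * c) * exp (-(a / 2) * c) = 1 := by
    rw [← exp_add, neg_mul, add_neg_cancel, exp_zero]
  rw [hsplit, div_mul_eq_mul_div, le_div_iff₀ (by positivity)]
  calc c ^ 2 * (exp (-(a / 2) * c) * exp (-(a / 2) * c)) * a ^ 2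
      = a ^ 2 * c ^ 2 * exp (-(a / 2) * c) * exp (-(a / 2) * c) := by ring
    _ ≤ 8 * exp (a / 2 * c) * exp (-(a / 2) * c) * exp (-(a / 2) * c) := by gcongr
    _ = 8 * exp (-(a / 2) * c) := by rw [mul_assoc 8, hinv, mul_one]

theorem integrable_exp_neg_mul_cosh {b : ℝ} (hb : 0 < b) :
    Integrable fun t ↦ exp (-b * cosh t) := by
  refine (integrable_exp_neg_mul_sq (by positivity : 0 < b / 4)).mono' (by fun_prop)
    (ae_of_all _ fun t ↦ ?_)
  rw [norm_of_nonneg (exp_pos _).le, exp_le_exp]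
  nlinarith [one_add_sq_div_four_le_cosh t]

section ExpNegMulCosh

variable {w : ℝ}

theorem integrable_cosh_sq_mul_exp_neg_mul_cosh (hw : 0 < w) :
    Integrable fun t ↦ cosh t ^ 2 * exp (-w * cosh t) :=
  ((integrable_exp_neg_mul_cosh (half_pos hw)).const_mul (8 / w ^ 2)).mono' (by fun_prop)
    (ae_of_all _ fun t ↦ by
      rw [norm_of_nonneg (by positivity)]
      exact sq_mul_exp_neg_mul_le hw (cosh_pos t).le)

theorem hasDerivAt_exp_neg_mul_cosh (t : ℝ) :
    HasDerivAt (fun t ↦ exp (-w * cosh t)) (-w * sinh t * exp (-w * cosh t)) t := by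
  refine ((hasDerivAt_cosh t).const_mul (-w)).exp.congr_deriv ?_
  ring

theorem hasDerivAt_sinh_mul_exp_neg_mul_cosh (t : ℝ) :
    HasDerivAt (fun t ↦ -w * sinh t * exp (-w * cosh t))
      ((w ^ 2 * sinh t ^ 2 - w * cosh t) * exp (-w * cosh t)) t := by
  refine (((hasDerivAt_sinh t).const_mul (-w)).mul
    (hasDerivAt_exp_neg_mul_cosh t)).congr_deriv ?_
  ring

theorem integrable_fourier_exp_neg_mul_cosh (hw : 0 < w) :
    Integrable (𝓕 fun t ↦ (exp (-w * cosh t) : ℂ)) := by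
  have hdom := integrable_cosh_sq_mul_exp_neg_mul_cosh hw
  have h1 : Integrable fun t ↦ -w * sinh t * exp (-w * cosh t) := by
    refine (hdom.const_mul w).mono' (by fun_prop) (ae_of_all _ fun t ↦ ?_)
    have := abs_sinh_le_cosh t
    have := one_le_cosh t
    rw [Real.norm_eq_abs, abs_mul, abs_mul, abs_neg, abs_of_pos hw, abs_of_pos (exp_pos _),
      ← mul_assoc]
    gcongr
    nlinarith
  have h2 : Integrable fun t ↦ (w ^ 2 * sinh t ^ 2 - w * cosh t) * exp (-w * cosh t) := by
    refine (hdom.const_mul (w ^ 2 + w)).mono' (by fun_prop) (ae_of_all _ fun t ↦ ?_)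
    have hs : sinh t ^ 2 ≤ cosh t ^ 2 := by rw [cosh_sq]; linarith
    have hc : cosh t ≤ cosh t ^ 2 := by nlinarith [one_le_cosh t]
    rw [Real.norm_eq_abs, abs_mul, abs_of_pos (exp_pos _), ← mul_assoc]
    gcongr
    rw [abs_le]
    constructor <;> nlinarith [mul_le_mul_of_nonneg_left hs (sq_nonneg w),
      mul_le_mul_of_nonneg_left hc hw.le, sq_nonneg (w * sinh t), cosh_pos t]
  exact integrable_fourier_of_hasDerivAt_hasDerivAt
    (fun t ↦ (hasDerivAt_exp_neg_mul_cosh t).ofReal_comp)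
    (fun t ↦ (hasDerivAt_sinh_mul_exp_neg_mul_cosh t).ofReal_comp)
    (integrable_exp_neg_mul_cosh hw).ofReal h1.ofReal h2.ofReal

theorem integral_Kiy_mul_cos (hw : 0 < w) (s : ℝ) :
    ∫ y in Ioi 0, Kiy y w * cos (y * s) = π / 2 * exp (-w * cosh s) := by
  rw [← cosTransform_cosTransform_eq (integrable_exp_neg_mul_cosh hw) (fun t ↦ by simp)
    (integrable_fourier_exp_neg_mul_cosh hw) (by fun_prop : Continuous _).continuousAt]
  simp only [cosTransform, Kiy, mul_comm s]

theorem integrableOn_Kiy_mul_cos (hw : 0 < w) (s : ℝ) :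
    IntegrableOn (fun y ↦ Kiy y w * cos (y * s)) (Ioi 0) := by
  have h := integrable_mul_cos (integrable_cosTransform (integrable_exp_neg_mul_cosh hw)
    (fun t ↦ by simp) (integrable_fourier_exp_neg_mul_cosh hw)) s
  change IntegrableOn (fun y ↦ cosTransform (fun t ↦ exp (-w * cosh t)) y * cos (y * s)) (Ioi 0)
  simpa only [mul_comm s] using h.integrableOn

end ExpNegMulCosh

theorem sin_mul_cos_mul_sin (a b c : ℝ) :
    sin a * cos b * sin c =
      (cos (c - a + b) + cos (c - a - b) - cos (c + a + b) - cos (c + a - b)) / 4 := by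
  simp only [cos_add, cos_sub, sin_add, sin_sub]
  ring

theorem stmt2 (u v w x : ℝ) (hw : 0 < w) :
    Phi x u v w = (8 / Real.pi) *
      ∫ y in Ioi (0:ℝ), Real.sin (y * u) * Real.cos (y * v) * Real.sin (x * y) * Kiy y w := by
  have hI := integrableOn_Kiy_mul_cos hw
  have hsplit (y : ℝ) : sin (y * u) * cos (y * v) * sin (x * y) * Kiy y w =
      (Kiy y w * cos (y * (x - u + v)) + Kiy y w * cos (y * (x - u - v))
        - Kiy y w * cos (y * (x + u + v)) - Kiy y w * cos (y * (x + u - v))) / 4 := by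
    rw [sin_mul_cos_mul_sin]
    ring_nf
  rw [setIntegral_congr_fun measurableSet_Ioi fun y _ ↦ hsplit y, integral_div,
    integral_sub ?int3 (hI _), integral_sub ?int2 (hI _), integral_add (hI _) (hI _)]
  case int2 => exact (hI _).add (hI _)
  case int3 => exact ((hI _).add (hI _)).sub (hI _)
  simp only [integral_Kiy_mul_cos hw, Phi]
  field_simp
  ring
end

section
/- If f, g ∈ L¹(ℝ₊) and h ∈ L₁^{0,β}(ℝ₊) with β ∈ (0,1), then the polyconvolution P(f,g,h) is a bounded continuous function on ℝ₊ vanishing at infinity, i.e. P(f,g,h) ∈ C₀(ℝ₊). -/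
open MeasureTheory Set Filter

open Real Topology

/-!
Since `cosh ≥ 1`, the kernel satisfies `|Φ(x, u, v, w)| ≤ 2 e^{-w}` for `w ≥ 0`, and the weight
condition on `h` gives integrability of `|h(w)| e^{-w}` because
`K₀(βw) ≥ ∫₀^δ e^{-βw cosh t} dt ≥ δ e^{-w}` with `δ = arcosh (1/β)`. Hence the integrand of `P`,
viewed on `ℝ₊³`, is dominated by `2 |f(u)| |g(v)| |h(w)| e^{-w}` uniformly in `x`, and dominated
convergence gives continuity, boundedness and, as `Φ(x, u, v, w) → 0` for `x → ∞`, the limit `0`.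
-/

theorem MeasureTheory.AEStronglyMeasurable.of_mul_left {α : Type*} [MeasurableSpace α]
    {μ : Measure α} {φ h : α → ℝ} (hφ : Measurable φ) (hφ0 : ∀ᵐ a ∂μ, φ a ≠ 0)
    (hφh : AEStronglyMeasurable (fun a => φ a * h a) μ) : AEStronglyMeasurable h μ :=
  (hφh.mul hφ.inv.aestronglyMeasurable).congr <| by
    filter_upwards [hφ0] with a ha
    show φ a * h a * (φ a)⁻¹ = h a
    field_simp

theorem MeasureTheory.integral_integral_integral {α β γ E : Type*} [MeasurableSpace α]
    [MeasurableSpace β] [MeasurableSpace γ] [NormedAddCommGroup E] [NormedSpace ℝ E]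
    {μ : Measure α} {ν : Measure β} {ρ : Measure γ} [SFinite μ] [SFinite ν] [SFinite ρ]
    {F : α × β × γ → E} (hF : Integrable F (μ.prod (ν.prod ρ))) :
    ∫ a, ∫ b, ∫ c, F (a, b, c) ∂ρ ∂ν ∂μ = ∫ p, F p ∂μ.prod (ν.prod ρ) := by
  rw [← integral_integral (f := fun a q => F (a, q)) hF]
  refine integral_congr_ae ?_
  filter_upwards [hF.prod_right_ae] with a ha
  exact integral_integral ha

local notation "μ₊" => Measure.restrict (volume : Measure ℝ) (Ioi 0)

local notation "μ₊³" => Measure.prod μ₊ (Measure.prod μ₊ μ₊)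

lemma integrableOn_exp_neg_mul_cosh {c : ℝ} (hc : 0 < c) :
    IntegrableOn (fun t => exp (-c * cosh t)) (Ioi 0) := by
  refine (exp_neg_integrableOn_Ioi 0 hc).mono' (by fun_prop) ?_
  filter_upwards [ae_restrict_mem measurableSet_Ioi] with t (ht : 0 < t)
  have : t < cosh t := (self_lt_sinh_iff.2 ht).trans (sinh_lt_cosh t)
  rw [norm_of_nonneg (exp_pos _).le, exp_le_exp]
  nlinarith

lemma arcosh_inv_mul_exp_neg_le_K0 {β : ℝ} (hβ₀ : 0 < β) (hβ₁ : β < 1) {w : ℝ} (hw : 0 < w) :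
    arcosh β⁻¹ * exp (-w) ≤ K0 (β * w) := by
  set δ := arcosh β⁻¹
  have hβ_inv : 1 < β⁻¹ := one_lt_inv₀ hβ₀ |>.2 hβ₁
  have hδ : 0 < δ := arcosh_pos hβ_inv
  have hint := integrableOn_exp_neg_mul_cosh (mul_pos hβ₀ hw)
  calc δ * exp (-w) = ∫ _ in Ioc 0 δ, exp (-w) := by
        rw [setIntegral_const, volume_real_Ioc_of_le hδ.le, sub_zero, smul_eq_mul]
    _ ≤ ∫ t in Ioc 0 δ, exp (-(β * w) * cosh t) := by
        refine setIntegral_mono_on (integrableOn_const measure_Ioc_lt_top.ne)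
          (hint.mono_set Ioc_subset_Ioi_self) measurableSet_Ioc fun t ht => ?_
        have : β * cosh t ≤ 1 := by
          calc β * cosh t ≤ β * cosh δ :=
                mul_le_mul_of_nonneg_left (cosh_le_cosh.2 (by
                  rw [abs_of_pos ht.1, abs_of_pos hδ]; exact ht.2)) hβ₀.le
            _ = 1 := by rw [cosh_arcosh hβ_inv.le, mul_inv_cancel₀ hβ₀.ne']
        rw [exp_le_exp]
        nlinarith
    _ ≤ K0 (β * w) :=
        setIntegral_mono_set hint (Eventually.of_forall fun _ => (exp_pos _).le)
          Ioc_subset_Ioi_self.eventuallyLE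

lemma integrableOn_abs_mul_exp_neg {h : ℝ → ℝ} {β : ℝ} (hβ₀ : 0 < β) (hβ₁ : β < 1)
    (hmeas : AEStronglyMeasurable h μ₊)
    (hh : IntegrableOn (fun w => |h w| * K0 (β * w)) (Ioi 0)) :
    IntegrableOn (fun w => |h w| * exp (-w)) (Ioi 0) := by
  have hδ : 0 < arcosh β⁻¹ := arcosh_pos (one_lt_inv₀ hβ₀ |>.2 hβ₁)
  refine (hh.const_mul (arcosh β⁻¹)⁻¹).mono'
    (hmeas.norm.mul (by fun_prop : Continuous fun w => exp (-w)).aestronglyMeasurable) ?_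
  filter_upwards [ae_restrict_mem measurableSet_Ioi] with w (hw : 0 < w)
  rw [norm_of_nonneg (by positivity), mul_left_comm]
  exact mul_le_mul_of_nonneg_left
    ((le_inv_mul_iff₀ hδ).2 (arcosh_inv_mul_exp_neg_le_K0 hβ₀ hβ₁ hw)) (abs_nonneg _)

lemma abs_Phi_le (x u v : ℝ) {w : ℝ} (hw : 0 ≤ w) : |Phi x u v w| ≤ 2 * exp (-w) := by
  have hle : ∀ a, exp (-w * cosh a) ≤ exp (-w) := fun a => by
    rw [exp_le_exp]; nlinarith [one_le_cosh a]
  have hpos : ∀ a, 0 < exp (-w * cosh a) := fun a => exp_pos _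
  rw [Phi, abs_le]
  constructor <;> linarith [hle (x - u + v), hle (x - u - v), hle (x + u + v), hle (x + u - v),
    hpos (x - u + v), hpos (x - u - v), hpos (x + u + v), hpos (x + u - v)]

lemma tendsto_exp_neg_mul_cosh_add_atTop {w : ℝ} (hw : 0 < w) (a : ℝ) :
    Tendsto (fun x => exp (-w * cosh (x + a))) atTop (𝓝 0) := by
  have hcosh : Tendsto cosh atTop atTop :=
    tendsto_atTop_mono (fun y => by rw [cosh_eq]; linarith [exp_pos (-y)])
      (tendsto_exp_atTop.atTop_div_const two_pos)
  exact tendsto_exp_atBot.comp <| (hcosh.comp (tendsto_atTop_add_const_right _ a tendsto_id))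
    |>.const_mul_atTop_of_neg (neg_lt_zero.2 hw)

lemma tendsto_Phi_atTop (u v : ℝ) {w : ℝ} (hw : 0 < w) :
    Tendsto (fun x => Phi x u v w) atTop (𝓝 0) := by
  have hE := tendsto_exp_neg_mul_cosh_add_atTop hw
  have := (((hE (-u + v)).add (hE (-u - v))).sub (hE (u + v))).sub (hE (u - v))
  rw [add_zero, sub_zero, sub_zero] at this
  convert this using 2 with x
  simp only [Phi]
  ring_nf

lemma hasDerivAt_Phi_zero (x u v : ℝ) :
    HasDerivAt (Phi x u v) (4 * sinh x * sinh u * cosh v) 0 := by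
  have hE : ∀ c : ℝ, HasDerivAt (fun w => exp (-w * c)) (-c) 0 := fun c => by
    simpa using ((hasDerivAt_id (0:ℝ)).neg.mul_const c).exp
  refine ((((hE (cosh (x - u + v))).add (hE (cosh (x - u - v)))).sub
    (hE (cosh (x + u + v)))).sub (hE (cosh (x + u - v)))).congr_deriv ?_
  simp only [cosh_add, cosh_sub, sinh_add, sinh_sub]
  ring

/-- `Φ(x, u, v, ·)` is analytic with nonzero derivative at `0`, so its zeros are isolated. -/
lemma ae_Phi_ne_zero {x u : ℝ} (hx : x ≠ 0) (hu : u ≠ 0) (v : ℝ) :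
    ∀ᵐ w, Phi x u v w ≠ 0 := by
  have hana : AnalyticOnNhd ℝ (Phi x u v) univ := fun w _ => by unfold Phi; fun_prop
  rcases hana.eqOn_zero_or_eventually_ne_zero_of_preconnected isPreconnected_univ with h0 | h
  · have hderiv := (hasDerivAt_Phi_zero x u v).deriv
    rw [show Phi x u v = 0 from funext fun w => h0 (mem_univ w), deriv_zero] at hderiv
    have : 4 * sinh x * sinh u * cosh v ≠ 0 := by
      have := cosh_pos v
      simp_all
    exact absurd hderiv.symm this
  · have hae := ae_restrict_le_codiscreteWithin (μ := (volume : Measure ℝ)) MeasurableSet.univ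
    rw [Measure.restrict_univ] at hae
    exact hae h

/-- If `h` is not a.e. measurable, every inner integral in `w` is undefined, hence `0` in Lean:
integrability of `Φ · h` would make `h` measurable since `Φ` vanishes only on a null set. -/
lemma polyconv_eq_zero_of_not_aestronglyMeasurable {f g h : ℝ → ℝ}
    (hmeas : ¬ AEStronglyMeasurable h μ₊) {x : ℝ} (hx : 0 < x) : polyconv f g h x = 0 := by
  have hinner : ∀ u ∈ Ioi (0:ℝ), ∀ v, ∫ w in Ioi 0, Phi x u v w * f u * g v * h w = 0 := by
    intro u (hu : 0 < u) v
    by_cases hfg : f u * g v = 0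
    · rcases mul_eq_zero.1 hfg with h0 | h0 <;> simp [h0]
    refine integral_undef fun hint => hmeas <| hint.aestronglyMeasurable.of_mul_left
      (φ := fun w => Phi x u v w * f u * g v) (by unfold Phi; fun_prop) ?_
    filter_upwards [ae_restrict_of_ae (ae_Phi_ne_zero hx.ne' hu.ne' v)] with w hw
    exact mul_ne_zero (mul_ne_zero hw (left_ne_zero_of_mul hfg)) (right_ne_zero_of_mul hfg)
  have houter : ∀ u ∈ Ioi (0:ℝ),
      ∫ v in Ioi 0, ∫ w in Ioi 0, Phi x u v w * f u * g v * h w = 0 := fun u hu => by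
    simp [hinner u hu]
  rw [polyconv, setIntegral_congr_fun measurableSet_Ioi houter]
  simp

noncomputable def polyconvIntegrand (f g h : ℝ → ℝ) (x : ℝ) (p : ℝ × ℝ × ℝ) : ℝ :=
  Phi x p.1 p.2.1 p.2.2 * f p.1 * g p.2.1 * h p.2.2

noncomputable def polyconvBound (f g h : ℝ → ℝ) (p : ℝ × ℝ × ℝ) : ℝ :=
  |f p.1| * (|g p.2.1| * (2 * (|h p.2.2| * exp (-p.2.2))))

lemma ae_mem_Ioi_prod_Ioi_prod_Ioi : ∀ᵐ p ∂μ₊³, p ∈ Ioi 0 ×ˢ Ioi 0 ×ˢ Ioi (0:ℝ) := by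
  rw [Measure.prod_restrict, Measure.prod_restrict]
  exact ae_restrict_mem (measurableSet_Ioi.prod (measurableSet_Ioi.prod measurableSet_Ioi))

lemma norm_polyconvIntegrand_le (f g h : ℝ → ℝ) (x : ℝ) :
    ∀ᵐ p ∂μ₊³, ‖polyconvIntegrand f g h x p‖ ≤ polyconvBound f g h p := by
  filter_upwards [ae_mem_Ioi_prod_Ioi_prod_Ioi] with p hp
  calc ‖polyconvIntegrand f g h x p‖
      = |Phi x p.1 p.2.1 p.2.2| * |f p.1| * |g p.2.1| * |h p.2.2| := by
        simp only [polyconvIntegrand, norm_mul, norm_eq_abs]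
    _ ≤ 2 * exp (-p.2.2) * |f p.1| * |g p.2.1| * |h p.2.2| := by
        gcongr; exact abs_Phi_le _ _ _ hp.2.2.le
    _ = polyconvBound f g h p := by rw [polyconvBound]; ring

section Dominated

variable {f g h : ℝ → ℝ}

lemma aestronglyMeasurable_polyconvIntegrand (hf : IntegrableOn f (Ioi 0))
    (hg : IntegrableOn g (Ioi 0)) (hmeas : AEStronglyMeasurable h μ₊) (x : ℝ) :
    AEStronglyMeasurable (polyconvIntegrand f g h x) μ₊³ := by
  have hPhi : Continuous fun p : ℝ × ℝ × ℝ => Phi x p.1 p.2.1 p.2.2 := by unfold Phi; fun_prop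
  exact ((hPhi.aestronglyMeasurable.mul hf.1.comp_fst).mul hg.1.comp_fst.comp_snd).mul
    hmeas.comp_snd.comp_snd

lemma integrable_polyconvBound (hf : IntegrableOn f (Ioi 0)) (hg : IntegrableOn g (Ioi 0))
    (hH : IntegrableOn (fun w => |h w| * exp (-w)) (Ioi 0)) :
    Integrable (polyconvBound f g h) μ₊³ :=
  hf.abs.mul_prod (hg.abs.mul_prod (hH.const_mul 2))

lemma polyconv_eq_integral (hf : IntegrableOn f (Ioi 0)) (hg : IntegrableOn g (Ioi 0))
    (hH : IntegrableOn (fun w => |h w| * exp (-w)) (Ioi 0)) (hmeas : AEStronglyMeasurable h μ₊)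
    (x : ℝ) :
    polyconv f g h x = 1 / (2 * Real.sqrt (2 * Real.pi)) * ∫ p, polyconvIntegrand f g h x p ∂μ₊³ := by
  have hint : Integrable (polyconvIntegrand f g h x) μ₊³ :=
    (integrable_polyconvBound hf hg hH).mono'
      (aestronglyMeasurable_polyconvIntegrand hf hg hmeas x) (norm_polyconvIntegrand_le f g h x)
  rw [polyconv, ← integral_integral_integral hint]
  rfl

lemma continuous_polyconv (hf : IntegrableOn f (Ioi 0)) (hg : IntegrableOn g (Ioi 0))
    (hH : IntegrableOn (fun w => |h w| * exp (-w)) (Ioi 0)) (hmeas : AEStronglyMeasurable h μ₊) :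
    Continuous (polyconv f g h) := by
  simp only [funext (polyconv_eq_integral hf hg hH hmeas)]
  refine continuous_const.mul <| continuous_of_dominated
    (aestronglyMeasurable_polyconvIntegrand hf hg hmeas) (norm_polyconvIntegrand_le f g h)
    (integrable_polyconvBound hf hg hH) (ae_of_all _ fun p => ?_)
  unfold polyconvIntegrand Phi
  fun_prop

lemma exists_abs_polyconv_le (hf : IntegrableOn f (Ioi 0)) (hg : IntegrableOn g (Ioi 0))
    (hH : IntegrableOn (fun w => |h w| * exp (-w)) (Ioi 0)) (hmeas : AEStronglyMeasurable h μ₊) :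
    ∃ M, ∀ x, |polyconv f g h x| ≤ M := by
  refine ⟨|1 / (2 * Real.sqrt (2 * Real.pi))| * ∫ p, polyconvBound f g h p ∂μ₊³, fun x => ?_⟩
  rw [polyconv_eq_integral hf hg hH hmeas, abs_mul]
  gcongr
  exact norm_integral_le_of_norm_le (integrable_polyconvBound hf hg hH)
    (norm_polyconvIntegrand_le f g h x)

lemma tendsto_polyconv_atTop (hf : IntegrableOn f (Ioi 0)) (hg : IntegrableOn g (Ioi 0))
    (hH : IntegrableOn (fun w => |h w| * exp (-w)) (Ioi 0)) (hmeas : AEStronglyMeasurable h μ₊) :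
    Tendsto (polyconv f g h) atTop (𝓝 0) := by
  simp only [funext (polyconv_eq_integral hf hg hH hmeas)]
  have hlim : ∀ᵐ p ∂μ₊³, Tendsto (polyconvIntegrand f g h · p) atTop (𝓝 0) := by
    filter_upwards [ae_mem_Ioi_prod_Ioi_prod_Ioi] with p hp
    simpa [polyconvIntegrand] using (((tendsto_Phi_atTop p.1 p.2.1 hp.2.2).mul_const
      (f p.1)).mul_const (g p.2.1)).mul_const (h p.2.2)
  simpa using (tendsto_integral_filter_of_dominated_convergence _
    (Eventually.of_forall (aestronglyMeasurable_polyconvIntegrand hf hg hmeas))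
    (Eventually.of_forall (norm_polyconvIntegrand_le f g h))
    (integrable_polyconvBound hf hg hH) hlim).const_mul (1 / (2 * Real.sqrt (2 * Real.pi)))

end Dominated

theorem stmt7 (f g h : ℝ → ℝ) (β : ℝ) (hβ : β ∈ Ioo (0:ℝ) 1)
    (hf : IntegrableOn f (Ioi 0)) (hg : IntegrableOn g (Ioi 0))
    (hh : IntegrableOn (fun w => |h w| * K0 (β * w)) (Ioi 0)) :
    ContinuousOn (polyconv f g h) (Ioi 0) ∧
      (∃ M : ℝ, ∀ x ∈ Ioi (0:ℝ), |polyconv f g h x| ≤ M) ∧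
      Tendsto (polyconv f g h) atTop (nhds 0) := by
  by_cases hmeas : AEStronglyMeasurable h μ₊
  · have hH := integrableOn_abs_mul_exp_neg hβ.1 hβ.2 hmeas hh
    obtain ⟨M, hM⟩ := exists_abs_polyconv_le hf hg hH hmeas
    exact ⟨(continuous_polyconv hf hg hH hmeas).continuousOn, ⟨M, fun x _ => hM x⟩,
      tendsto_polyconv_atTop hf hg hH hmeas⟩
  · have h0 : EqOn (polyconv f g h) 0 (Ioi 0) := fun x hx =>
      polyconv_eq_zero_of_not_aestronglyMeasurable hmeas hx
    refine ⟨continuousOn_const.congr h0, ⟨0, fun x hx => by simp [h0 hx]⟩, ?_⟩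
    exact tendsto_const_nhds.congr' ((eventually_gt_atTop 0).mono fun x hx => (h0 hx).symm)
end
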